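/- Let α ∈ [0,1] and ρ > 0. There exists a constant C > 0 (depending only on α and ρ) such that for every n ≥ 2 and every x ∈ [0,1], Σ_{k=0}^{n−1} p_{n−1,k}^α(x)·∫₀¹ μ_{n,k}^ρ(t)|t−x| dt ≤ C/√n and Σ_{k=0}^{n−1} p_{n−1,k}^α(x)·∫₀¹ μ_{n,k+1}^ρ(t)|t−x| dt ≤ C/√n. -/

import Mathlib

open MeasureTheory Finset Filter

noncomputable def bin (m : ℕ) (j : ℤ) : ℝ :=
  if 0 ≤ j ∧ j ≤ (m : ℤ) then (m.choose j.toNat : ℝ) else 0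

/-- The α-Bernstein basis polynomial `p_{n,k}^α(x)` (with `k : ℤ`, vanishing out of range). -/
noncomputable def bp (α : ℝ) (n : ℕ) (k : ℤ) (x : ℝ) : ℝ :=
  if n = 1 then (if k = 0 then 1 - x else if k = 1 then x else 0)
  else
    (1 - α) * (bin (n - 2) k * x ^ k.toNat * (1 - x) ^ (n - 1 - k.toNat)
      + bin (n - 2) (k - 2) * x ^ (k.toNat - 1) * (1 - x) ^ (n - k.toNat))
    + α * bin n k * x ^ k.toNat * (1 - x) ^ (n - k.toNat)

/-- Euler Beta function. -/
noncomputable def betaFn (a b : ℝ) : ℝ := Real.Gamma a * Real.Gamma b / Real.Gamma (a + b)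

/-- The Pălțănea kernel `μ_{n,k}^ρ(t)`. -/
noncomputable def pal (ρ : ℝ) (n k : ℕ) (t : ℝ) : ℝ :=
  t ^ ((k : ℝ) * ρ) * (1 - t) ^ (((n : ℝ) - (k : ℝ)) * ρ)
    / betaFn ((k : ℝ) * ρ + 1) (((n : ℝ) - (k : ℝ)) * ρ + 1)

/-!
`μ_{n,j}^ρ` is the Beta(`jρ + 1`, `(n - j)ρ + 1`) density, so its second moment about `x` is its
variance, at most `1 / (4(nρ + 2))`, plus the squared bias `((jρ + 1) / (nρ + 2) - x)²`. For
`j ∈ {k, k + 1}` the bias is `ρ(k - (n - 1)x) / (nρ + 2)` up to `O(1/n)`, and `p_{n-1,k}^α` is a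
mixture of classical Bernstein bases of degrees `n - 3` and `n - 1`, so its second moment about
`(n - 1)x` is `O(n)`. Hence the `p^α`-average of the second moments of the kernels is `O(1/n)`,
and `|t - x| ≤ (√n (t - x)² + 1/√n) / 2` turns this into the bound `O(1/√n)` on the first
absolute moments.
-/

lemma betaFn_pos {a b : ℝ} (ha : 0 < a) (hb : 0 < b) : 0 < betaFn a b :=
  ProbabilityTheory.beta_pos ha hb

lemma betaFn_add_one_left {a b : ℝ} (ha : 0 < a) (hb : 0 < b) :
    betaFn (a + 1) b = a / (a + b) * betaFn a b := by
  have hab : a + b ≠ 0 := by positivity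
  unfold betaFn
  rw [Real.Gamma_add_one ha.ne', add_right_comm, Real.Gamma_add_one hab]
  have := (Real.Gamma_pos_of_pos (add_pos ha hb)).ne'
  field_simp

lemma integral_rpow_mul_one_sub_rpow {p q : ℝ} (hp : 0 ≤ p) (hq : 0 ≤ q) :
    ∫ t in (0:ℝ)..1, t ^ p * (1 - t) ^ q = betaFn (p + 1) (q + 1) := by
  have h := ProbabilityTheory.beta_eq_betaIntegralReal (p + 1) (q + 1) (by linarith) (by linarith)
  have hint : Complex.betaIntegral ↑(p + 1) ↑(q + 1) = ↑(∫ t in (0:ℝ)..1, t ^ p * (1 - t) ^ q) := by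
    rw [Complex.betaIntegral, ← intervalIntegral.integral_ofReal]
    refine intervalIntegral.integral_congr fun t ht => ?_
    rw [Set.uIcc_of_le zero_le_one] at ht
    push_cast
    rw [add_sub_cancel_right, add_sub_cancel_right, ← Complex.ofReal_one, ← Complex.ofReal_sub,
      ← Complex.ofReal_cpow ht.1, ← Complex.ofReal_cpow (sub_nonneg.2 ht.2)]
  rw [hint, Complex.ofReal_re] at h
  exact h.symm

/-- The Beta(`p + 1`, `q + 1`) density. -/
noncomputable def betaDensity (p q t : ℝ) : ℝ := t ^ p * (1 - t) ^ q / betaFn (p + 1) (q + 1)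

section BetaDensity

variable {p q : ℝ}

lemma continuous_betaDensity (hp : 0 ≤ p) (hq : 0 ≤ q) : Continuous (betaDensity p q) := by
  unfold betaDensity
  fun_prop (disch := assumption)

lemma betaDensity_nonneg (hp : 0 ≤ p) (hq : 0 ≤ q) {t : ℝ} (ht : t ∈ Set.Icc (0:ℝ) 1) :
    0 ≤ betaDensity p q t := by
  have := betaFn_pos (by linarith : 0 < p + 1) (by linarith : 0 < q + 1)
  have := Real.rpow_nonneg ht.1 p
  have := Real.rpow_nonneg (sub_nonneg.2 ht.2) q
  unfold betaDensity
  positivity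

lemma integral_betaDensity_mul_pow (hp : 0 ≤ p) (hq : 0 ≤ q) (i : ℕ) :
    ∫ t in (0:ℝ)..1, betaDensity p q t * t ^ i
      = betaFn (p + i + 1) (q + 1) / betaFn (p + 1) (q + 1) := by
  have hmul : ∀ t ∈ Set.uIcc (0:ℝ) 1, betaDensity p q t * t ^ i
      = t ^ (p + i) * (1 - t) ^ q / betaFn (p + 1) (q + 1) := by
    intro t ht
    rw [Set.uIcc_of_le zero_le_one] at ht
    rw [betaDensity, Real.rpow_add_of_nonneg ht.1 hp (Nat.cast_nonneg i), Real.rpow_natCast]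
    ring
  rw [intervalIntegral.integral_congr hmul, intervalIntegral.integral_div,
    integral_rpow_mul_one_sub_rpow (by positivity) hq]

lemma integral_betaDensity (hp : 0 ≤ p) (hq : 0 ≤ q) :
    ∫ t in (0:ℝ)..1, betaDensity p q t = 1 := by
  simpa [(betaFn_pos (by linarith : 0 < p + 1) (by linarith : 0 < q + 1)).ne']
    using integral_betaDensity_mul_pow hp hq 0

lemma integral_betaDensity_mul_id (hp : 0 ≤ p) (hq : 0 ≤ q) :
    ∫ t in (0:ℝ)..1, betaDensity p q t * t = (p + 1) / (p + q + 2) := by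
  have ha : 0 < p + 1 := by linarith
  have hb : 0 < q + 1 := by linarith
  have h := integral_betaDensity_mul_pow hp hq 1
  simp only [pow_one, Nat.cast_one] at h
  rw [betaFn_add_one_left ha hb] at h
  rw [h, mul_div_assoc, div_self (betaFn_pos ha hb).ne', mul_one]
  ring_nf

lemma integral_betaDensity_mul_sq (hp : 0 ≤ p) (hq : 0 ≤ q) :
    ∫ t in (0:ℝ)..1, betaDensity p q t * t ^ 2
      = (p + 2) * (p + 1) / ((p + q + 3) * (p + q + 2)) := by
  have ha : 0 < p + 1 := by linarith
  have hb : 0 < q + 1 := by linarith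
  have h := integral_betaDensity_mul_pow hp hq 2
  rw [show p + (2:ℕ) + 1 = p + 1 + 1 + 1 by push_cast; ring, betaFn_add_one_left (by linarith) hb,
    betaFn_add_one_left ha hb] at h
  rw [h]
  have := (betaFn_pos ha hb).ne'
  field_simp
  ring

lemma integral_betaDensity_mul_sq_sub (hp : 0 ≤ p) (hq : 0 ≤ q) (x : ℝ) :
    ∫ t in (0:ℝ)..1, betaDensity p q t * (t - x) ^ 2
      = (p + 2) * (p + 1) / ((p + q + 3) * (p + q + 2)) - 2 * x * ((p + 1) / (p + q + 2))
        + x ^ 2 := by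
  have hc := continuous_betaDensity hp hq
  have i2 : IntervalIntegrable (fun t => betaDensity p q t * t ^ 2) volume 0 1 :=
    (by fun_prop : Continuous _).intervalIntegrable 0 1
  have i1 : IntervalIntegrable (fun t => 2 * x * (betaDensity p q t * t)) volume 0 1 :=
    (by fun_prop : Continuous _).intervalIntegrable 0 1
  have i0 : IntervalIntegrable (fun t => x ^ 2 * betaDensity p q t) volume 0 1 :=
    (by fun_prop : Continuous _).intervalIntegrable 0 1
  have hexpand : (fun t => betaDensity p q t * (t - x) ^ 2) = fun t =>
      betaDensity p q t * t ^ 2 - 2 * x * (betaDensity p q t * t) + x ^ 2 * betaDensity p q t := by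
    funext t; ring
  rw [hexpand, intervalIntegral.integral_add (i2.sub i1) i0, intervalIntegral.integral_sub i2 i1,
    intervalIntegral.integral_const_mul, intervalIntegral.integral_const_mul,
    integral_betaDensity_mul_sq hp hq, integral_betaDensity_mul_id hp hq,
    integral_betaDensity hp hq, mul_one]

lemma integral_betaDensity_mul_sq_sub_le (hp : 0 ≤ p) (hq : 0 ≤ q) (x : ℝ) :
    ∫ t in (0:ℝ)..1, betaDensity p q t * (t - x) ^ 2
      ≤ 1 / (4 * (p + q + 2)) + (p + 1 - x * (p + q + 2)) ^ 2 / (p + q + 2) ^ 2 := by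
  have hs : 0 < p + q + 2 := by linarith
  have hvar : (p + 1) * (q + 1) / ((p + q + 2) ^ 2 * (p + q + 3)) ≤ 1 / (4 * (p + q + 2)) := by
    rw [div_le_div_iff₀ (by positivity) (by positivity)]
    nlinarith [sq_nonneg (p - q), mul_nonneg hp hq]
  have hsplit : ∫ t in (0:ℝ)..1, betaDensity p q t * (t - x) ^ 2
      = (p + 1) * (q + 1) / ((p + q + 2) ^ 2 * (p + q + 3))
        + (p + 1 - x * (p + q + 2)) ^ 2 / (p + q + 2) ^ 2 := by
    rw [integral_betaDensity_mul_sq_sub hp hq]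
    field_simp
    ring
  linarith

lemma integral_betaDensity_mul_abs_sub_le (hp : 0 ≤ p) (hq : 0 ≤ q) {r : ℝ} (hr : 0 < r)
    (x : ℝ) :
    ∫ t in (0:ℝ)..1, betaDensity p q t * |t - x|
      ≤ (r * ∫ t in (0:ℝ)..1, betaDensity p q t * (t - x) ^ 2) / 2 + 1 / (2 * r) := by
  have hc := continuous_betaDensity hp hq
  have hamgm : ∀ y : ℝ, |y| ≤ r * y ^ 2 / 2 + 1 / (2 * r) := fun y => by
    have h : r * y ^ 2 / 2 + 1 / (2 * r) - |y| = (r * |y| - 1) ^ 2 / (2 * r) := by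
      rw [← sq_abs y]
      field_simp
      ring
    linarith [div_nonneg (sq_nonneg (r * |y| - 1)) (by positivity : (0:ℝ) ≤ 2 * r)]
  calc ∫ t in (0:ℝ)..1, betaDensity p q t * |t - x|
      ≤ ∫ t in (0:ℝ)..1, (r / 2 * (betaDensity p q t * (t - x) ^ 2)
          + 1 / (2 * r) * betaDensity p q t) := by
        refine intervalIntegral.integral_mono_on zero_le_one
          ((by fun_prop : Continuous _).intervalIntegrable 0 1)
          ((by fun_prop : Continuous _).intervalIntegrable 0 1) fun t ht => ?_
        have := mul_le_mul_of_nonneg_left (hamgm (t - x)) (betaDensity_nonneg hp hq ht)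
        linarith
    _ = (r * ∫ t in (0:ℝ)..1, betaDensity p q t * (t - x) ^ 2) / 2 + 1 / (2 * r) := by
        rw [intervalIntegral.integral_add ((by fun_prop : Continuous _).intervalIntegrable 0 1)
            ((by fun_prop : Continuous _).intervalIntegrable 0 1),
          intervalIntegral.integral_const_mul, intervalIntegral.integral_const_mul,
          integral_betaDensity hp hq]
        ring

end BetaDensity

noncomputable def bernsteinBasis (m k : ℕ) (x : ℝ) : ℝ := m.choose k * x ^ k * (1 - x) ^ (m - k)

section BernsteinBasis

variable (m : ℕ) (x : ℝ)

lemma bernsteinBasis_eq_eval (k : ℕ) :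
    bernsteinBasis m k x = (bernsteinPolynomial ℝ m k).eval x := by
  simp [bernsteinBasis, bernsteinPolynomial]

lemma bernsteinBasis_eq_zero_of_lt {k : ℕ} (hk : m < k) : bernsteinBasis m k x = 0 := by
  simp [bernsteinBasis, Nat.choose_eq_zero_of_lt hk]

lemma sum_bernsteinBasis : ∑ k ∈ range (m + 1), bernsteinBasis m k x = 1 := by
  simpa [bernsteinBasis_eq_eval, Polynomial.eval_finsetSum] using
    congrArg (Polynomial.eval x) (bernsteinPolynomial.sum ℝ m)

lemma sum_bernsteinBasis_mul_natCast :
    ∑ k ∈ range (m + 1), bernsteinBasis m k x * k = m * x := by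
  simpa [bernsteinBasis_eq_eval, Polynomial.eval_finsetSum, mul_comm] using
    congrArg (Polynomial.eval x) (bernsteinPolynomial.sum_smul ℝ m)

lemma sum_bernsteinBasis_mul_sq_sub :
    ∑ k ∈ range (m + 1), bernsteinBasis m k x * (k - m * x) ^ 2 = m * x * (1 - x) := by
  have h := congrArg (Polynomial.eval x) (bernsteinPolynomial.variance ℝ m)
  simp only [Polynomial.eval_finsetSum, Polynomial.eval_mul, Polynomial.eval_pow,
    Polynomial.eval_sub, Polynomial.eval_natCast, Polynomial.eval_X, Polynomial.eval_one,
    nsmul_eq_mul, ← bernsteinBasis_eq_eval] at h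
  rw [← h]
  exact sum_congr rfl fun k _ => by ring

lemma sum_bernsteinBasis_mul_sq_sub_add (d : ℝ) :
    ∑ k ∈ range (m + 1), bernsteinBasis m k x * (k - m * x + d) ^ 2
      = m * x * (1 - x) + d ^ 2 := by
  have hexpand : ∀ k : ℕ, bernsteinBasis m k x * (k - m * x + d) ^ 2
      = bernsteinBasis m k x * (k - m * x) ^ 2 + 2 * d * (bernsteinBasis m k x * k)
        + (d ^ 2 - 2 * d * (m * x)) * bernsteinBasis m k x := fun k => by ring
  simp only [hexpand, sum_add_distrib, ← mul_sum, sum_bernsteinBasis_mul_sq_sub,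
    sum_bernsteinBasis_mul_natCast, sum_bernsteinBasis]
  ring

end BernsteinBasis

lemma bin_natCast (m k : ℕ) : bin m k = m.choose k := by
  unfold bin
  split_ifs with h
  · simp
  · rw [Nat.choose_eq_zero_of_lt (by omega), Nat.cast_zero]

lemma bin_nonneg (m : ℕ) (j : ℤ) : 0 ≤ bin m j := by
  unfold bin
  split_ifs <;> positivity

section AlphaBernstein

variable {α x : ℝ}

lemma bp_add_two (m k : ℕ) :
    bp α (m + 2) k x
      = (1 - α) * ((1 - x) * bernsteinBasis m k x
          + x * (if 2 ≤ k then bernsteinBasis m (k - 2) x else 0))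
        + α * bernsteinBasis (m + 2) k x := by
  have hfirst : bin m k * x ^ k * (1 - x) ^ (m + 2 - 1 - k) = (1 - x) * bernsteinBasis m k x := by
    rw [bin_natCast, bernsteinBasis]
    rcases le_or_gt k m with hk | hk
    · rw [show m + 2 - 1 - k = m - k + 1 by omega, pow_succ]
      ring
    · simp [Nat.choose_eq_zero_of_lt hk]
  have hsecond : bin m ((k:ℤ) - 2) * x ^ (k - 1) * (1 - x) ^ (m + 2 - k)
      = x * (if 2 ≤ k then bernsteinBasis m (k - 2) x else 0) := by
    split_ifs with hk
    · obtain ⟨j, rfl⟩ : ∃ j, k = j + 2 := ⟨k - 2, by omega⟩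
      rw [show ((j + 2 : ℕ) : ℤ) - 2 = j by push_cast; ring, bin_natCast, bernsteinBasis,
        Nat.add_sub_cancel, show j + 2 - 1 = j + 1 by omega,
        show m + 2 - (j + 2) = m - j by omega, pow_succ]
      ring
    · rw [bin, if_neg (by omega)]
      ring
  rw [bp, if_neg (by omega), Int.toNat_natCast, Nat.add_sub_cancel, hfirst, hsecond,
    bin_natCast, bernsteinBasis.eq_def (m + 2)]
  ring

lemma sum_bp_add_two_mul (m : ℕ) (f : ℕ → ℝ) :
    ∑ k ∈ range (m + 2 + 1), bp α (m + 2) k x * f k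
      = (1 - α) * ((1 - x) * ∑ k ∈ range (m + 1), bernsteinBasis m k x * f k
          + x * ∑ k ∈ range (m + 1), bernsteinBasis m k x * f (k + 2))
        + α * ∑ k ∈ range (m + 2 + 1), bernsteinBasis (m + 2) k x * f k := by
  have hlow : ∑ k ∈ range (m + 2 + 1), bernsteinBasis m k x * f k
      = ∑ k ∈ range (m + 1), bernsteinBasis m k x * f k := by
    rw [sum_range_succ, sum_range_succ, bernsteinBasis_eq_zero_of_lt m x (by omega),
      bernsteinBasis_eq_zero_of_lt m x (by omega), zero_mul, zero_mul, add_zero, add_zero]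
  have hshift : ∑ k ∈ range (m + 2 + 1), (if 2 ≤ k then bernsteinBasis m (k - 2) x else 0) * f k
      = ∑ k ∈ range (m + 1), bernsteinBasis m k x * f (k + 2) := by
    rw [sum_range_succ', sum_range_succ']
    simp
  calc ∑ k ∈ range (m + 2 + 1), bp α (m + 2) k x * f k
      = ∑ k ∈ range (m + 2 + 1), ((1 - α) * (1 - x) * (bernsteinBasis m k x * f k)
          + (1 - α) * x * ((if 2 ≤ k then bernsteinBasis m (k - 2) x else 0) * f k)
          + α * (bernsteinBasis (m + 2) k x * f k)) :=
        sum_congr rfl fun k _ => by rw [bp_add_two]; ring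
    _ = _ := by
        rw [sum_add_distrib, sum_add_distrib, ← mul_sum, ← mul_sum, ← mul_sum, hlow, hshift]
        ring

lemma bp_nonneg (hα : α ∈ Set.Icc (0:ℝ) 1) (hx : x ∈ Set.Icc (0:ℝ) 1)
    (m : ℕ) (k : ℤ) : 0 ≤ bp α m k x := by
  obtain ⟨hα0, hα1⟩ := hα
  obtain ⟨hx0, hx1⟩ := hx
  have := sub_nonneg.2 hα1
  have := sub_nonneg.2 hx1
  have := bin_nonneg m k
  have := bin_nonneg (m - 2) k
  have := bin_nonneg (m - 2) (k - 2)
  unfold bp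
  split_ifs <;> positivity

lemma sum_bp {m : ℕ} (hm : 1 ≤ m) : ∑ k ∈ range (m + 1), bp α m k x = 1 := by
  obtain rfl | ⟨m, rfl⟩ : m = 1 ∨ ∃ m', m = m' + 2 := by
    rcases m with _ | _ | m <;> simp_all
  · simp [bp, sum_range_succ]
  · have h := sum_bp_add_two_mul (α := α) (x := x) m fun _ => 1
    simp only [mul_one, sum_bernsteinBasis] at h
    rw [h]
    ring

lemma sum_bp_add_two_mul_sq_sub (m : ℕ) :
    ∑ k ∈ range (m + 2 + 1), bp α (m + 2) k x * (k - (m + 2 : ℕ) * x) ^ 2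
      = (m + 4 - 2 * α) * x * (1 - x) := by
  have hlow : ∑ k ∈ range (m + 1), bernsteinBasis m k x * (k - (m + 2 : ℕ) * x) ^ 2
      = m * x * (1 - x) + (-2 * x) ^ 2 := by
    rw [← sum_bernsteinBasis_mul_sq_sub_add]
    exact sum_congr rfl fun k _ => by push_cast; ring
  have hhigh : ∑ k ∈ range (m + 1), bernsteinBasis m k x * ((k + 2 : ℕ) - (m + 2 : ℕ) * x) ^ 2
      = m * x * (1 - x) + (2 - 2 * x) ^ 2 := by
    rw [← sum_bernsteinBasis_mul_sq_sub_add]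
    exact sum_congr rfl fun k _ => by push_cast; ring
  rw [sum_bp_add_two_mul, hlow, hhigh, sum_bernsteinBasis_mul_sq_sub]
  push_cast
  ring

lemma sum_bp_mul_sq_sub_le (hα : α ∈ Set.Icc (0:ℝ) 1) (hx : x ∈ Set.Icc (0:ℝ) 1) {m : ℕ}
    (hm : 1 ≤ m) : ∑ k ∈ range (m + 1), bp α m k x * (k - m * x) ^ 2 ≤ (m + 2) / 4 := by
  obtain ⟨hα0, hα1⟩ := hα
  obtain ⟨hx0, hx1⟩ := hx
  have hxx : 0 ≤ x * (1 - x) := mul_nonneg hx0 (sub_nonneg.2 hx1)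
  have hxx' : x * (1 - x) ≤ 1 / 4 := by nlinarith [sq_nonneg (2 * x - 1)]
  obtain rfl | ⟨m, rfl⟩ : m = 1 ∨ ∃ m', m = m' + 2 := by
    rcases m with _ | _ | m <;> simp_all
  · norm_num [bp, sum_range_succ]
    nlinarith
  · rw [sum_bp_add_two_mul_sq_sub]
    push_cast
    nlinarith [mul_nonneg hα0 hxx, (m.cast_nonneg : (0:ℝ) ≤ m)]

end AlphaBernstein

lemma pal_eq_betaDensity (ρ : ℝ) (n j : ℕ) : pal ρ n j = betaDensity (j * ρ) ((n - j) * ρ) := rfl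

section Paltanea

variable {ρ : ℝ}

lemma integral_pal_mul_sq_sub_le (hρ : 0 < ρ) {n j : ℕ} (hj : j ≤ n) (x : ℝ) :
    ∫ t in (0:ℝ)..1, pal ρ n j t * (t - x) ^ 2
      ≤ 1 / (4 * (n * ρ + 2)) + (j * ρ + 1 - x * (n * ρ + 2)) ^ 2 / (n * ρ + 2) ^ 2 := by
  have hq : 0 ≤ ((n:ℝ) - j) * ρ := mul_nonneg (sub_nonneg.2 (by exact_mod_cast hj)) hρ.le
  have h := integral_betaDensity_mul_sq_sub_le (p := j * ρ) (by positivity) hq x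
  rw [pal_eq_betaDensity]
  rwa [show (j:ℝ) * ρ + (n - j) * ρ + 2 = n * ρ + 2 by ring] at h

lemma integral_pal_mul_abs_sub_le (hρ : 0 < ρ) {n j : ℕ} (hj : j ≤ n) {r : ℝ} (hr : 0 < r)
    (x : ℝ) :
    ∫ t in (0:ℝ)..1, pal ρ n j t * |t - x|
      ≤ (r * ∫ t in (0:ℝ)..1, pal ρ n j t * (t - x) ^ 2) / 2 + 1 / (2 * r) := by
  rw [pal_eq_betaDensity]
  exact integral_betaDensity_mul_abs_sub_le (by positivity)
    (mul_nonneg (sub_nonneg.2 (by exact_mod_cast hj)) hρ.le) hr x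

lemma integral_pal_add_mul_sq_sub_le (hρ : 0 < ρ) {m k d : ℕ} (hkd : k + d ≤ m + 1) (hd : d ≤ 1)
    {x : ℝ} (hx : x ∈ Set.Icc (0:ℝ) 1) :
    ∫ t in (0:ℝ)..1, pal ρ (m + 1) (k + d) t * (t - x) ^ 2
      ≤ 1 / (4 * (ρ * (m + 1))) + 2 * (ρ + 1) ^ 2 / (ρ * (m + 1)) ^ 2
        + 2 / ((m:ℝ) + 1) ^ 2 * (k - m * x) ^ 2 := by
  obtain ⟨hx0, hx1⟩ := hx
  have hd' : (d:ℝ) ≤ 1 := by exact_mod_cast hd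
  set c := d * ρ + 1 - (ρ + 2) * x
  have hc_sq : c ^ 2 ≤ (ρ + 1) ^ 2 := by
    apply sq_le_sq'
    · nlinarith [(d.cast_nonneg : (0:ℝ) ≤ d)]
    · nlinarith [(d.cast_nonneg : (0:ℝ) ≤ d)]
  have hbias : (((k + d : ℕ) : ℝ) * ρ + 1 - x * (((m + 1 : ℕ) : ℝ) * ρ + 2)) ^ 2
      ≤ 2 * ρ ^ 2 * (k - m * x) ^ 2 + 2 * (ρ + 1) ^ 2 := by
    have hsplit : ((k + d : ℕ) : ℝ) * ρ + 1 - x * (((m + 1 : ℕ) : ℝ) * ρ + 2)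
        = ρ * (k - m * x) + c := by push_cast; ring
    rw [hsplit]
    nlinarith [sq_nonneg (ρ * (k - m * x) - c)]
  have hs : ρ * (m + 1) ≤ ((m + 1 : ℕ) : ℝ) * ρ + 2 := by push_cast; linarith
  calc ∫ t in (0:ℝ)..1, pal ρ (m + 1) (k + d) t * (t - x) ^ 2
      ≤ 1 / (4 * (((m + 1 : ℕ) : ℝ) * ρ + 2))
        + (((k + d : ℕ) : ℝ) * ρ + 1 - x * (((m + 1 : ℕ) : ℝ) * ρ + 2)) ^ 2
          / (((m + 1 : ℕ) : ℝ) * ρ + 2) ^ 2 := integral_pal_mul_sq_sub_le hρ hkd x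
    _ ≤ 1 / (4 * (ρ * (m + 1)))
        + (2 * ρ ^ 2 * (k - m * x) ^ 2 + 2 * (ρ + 1) ^ 2) / (ρ * (m + 1)) ^ 2 := by
      gcongr
    _ = _ := by
      field_simp
      ring

lemma sum_bp_mul_integral_pal_mul_sq_sub_le {α : ℝ} (hα : α ∈ Set.Icc (0:ℝ) 1) (hρ : 0 < ρ)
    {m d : ℕ} (hm : 1 ≤ m) (hd : d ≤ 1) {x : ℝ} (hx : x ∈ Set.Icc (0:ℝ) 1) :
    ∑ k ∈ range (m + 1), bp α m k x * ∫ t in (0:ℝ)..1, pal ρ (m + 1) (k + d) t * (t - x) ^ 2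
      ≤ (1 / (4 * ρ) + 2 * (ρ + 1) ^ 2 / ρ ^ 2 + 1) / (m + 1) := by
  have hm1 : (1:ℝ) ≤ m := by exact_mod_cast hm
  set n : ℝ := m + 1
  have hn0 : 0 < n := by positivity
  set c₀ := 1 / (4 * (ρ * n)) + 2 * (ρ + 1) ^ 2 / (ρ * n) ^ 2 with hc₀
  have hA : c₀ + 2 / n ^ 2 * ((m + 2) / 4)
      ≤ (1 / (4 * ρ) + 2 * (ρ + 1) ^ 2 / ρ ^ 2 + 1) / n := by
    have h0 : 1 / (4 * (ρ * n)) = 1 / (4 * ρ) / n := by rw [div_div, mul_assoc]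
    have h1 : 2 * (ρ + 1) ^ 2 / (ρ * n) ^ 2 ≤ 2 * (ρ + 1) ^ 2 / ρ ^ 2 / n := by
      rw [mul_pow, ← div_div]
      gcongr
      nlinarith
    have h2 : 2 / n ^ 2 * ((m + 2) / 4) ≤ 1 / n := by
      rw [div_mul_div_comm, div_le_div_iff₀ (by positivity) hn0]
      nlinarith
    have h3 : (1 / (4 * ρ) + 2 * (ρ + 1) ^ 2 / ρ ^ 2 + 1) / n
        = 1 / (4 * ρ) / n + 2 * (ρ + 1) ^ 2 / ρ ^ 2 / n + 1 / n := by ring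
    rw [hc₀, h0, h3]
    linarith
  calc ∑ k ∈ range (m + 1), bp α m k x * ∫ t in (0:ℝ)..1, pal ρ (m + 1) (k + d) t * (t - x) ^ 2
      ≤ ∑ k ∈ range (m + 1), bp α m k x * (c₀ + 2 / n ^ 2 * (k - m * x) ^ 2) :=
        sum_le_sum fun k hk => mul_le_mul_of_nonneg_left
          (integral_pal_add_mul_sq_sub_le hρ (by have := mem_range.1 hk; omega) hd hx)
          (bp_nonneg hα hx m k)
    _ = c₀ * ∑ k ∈ range (m + 1), bp α m k x
        + 2 / n ^ 2 * ∑ k ∈ range (m + 1), bp α m k x * (k - m * x) ^ 2 := by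
        rw [mul_sum, mul_sum, ← sum_add_distrib]
        exact sum_congr rfl fun k _ => by ring
    _ ≤ c₀ + 2 / n ^ 2 * ((m + 2) / 4) := by
        rw [sum_bp hm, mul_one]
        gcongr
        exact sum_bp_mul_sq_sub_le hα hx hm
    _ ≤ _ := hA

lemma sum_bp_mul_integral_pal_mul_abs_sub_le {α : ℝ} (hα : α ∈ Set.Icc (0:ℝ) 1) (hρ : 0 < ρ)
    {m d : ℕ} (hm : 1 ≤ m) (hd : d ≤ 1) {x : ℝ} (hx : x ∈ Set.Icc (0:ℝ) 1) :
    ∑ k ∈ range (m + 1), bp α m k x * ∫ t in (0:ℝ)..1, pal ρ (m + 1) (k + d) t * |t - x|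
      ≤ (1 / (4 * ρ) + 2 * (ρ + 1) ^ 2 / ρ ^ 2 + 2) / 2 / √((m + 1 : ℕ) : ℝ) := by
  set A := 1 / (4 * ρ) + 2 * (ρ + 1) ^ 2 / ρ ^ 2 + 1
  set r := √((m + 1 : ℕ) : ℝ)
  have hr : 0 < r := Real.sqrt_pos.2 (by positivity)
  have hr2 : r ^ 2 = (m:ℝ) + 1 := by rw [Real.sq_sqrt (by positivity)]; push_cast; ring
  calc ∑ k ∈ range (m + 1), bp α m k x * ∫ t in (0:ℝ)..1, pal ρ (m + 1) (k + d) t * |t - x|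
      ≤ ∑ k ∈ range (m + 1), bp α m k x
          * ((r * ∫ t in (0:ℝ)..1, pal ρ (m + 1) (k + d) t * (t - x) ^ 2) / 2 + 1 / (2 * r)) :=
        sum_le_sum fun k hk => mul_le_mul_of_nonneg_left
          (integral_pal_mul_abs_sub_le hρ (by have := mem_range.1 hk; omega) hr x)
          (bp_nonneg hα hx m k)
    _ = r / 2 * (∑ k ∈ range (m + 1),
          bp α m k x * ∫ t in (0:ℝ)..1, pal ρ (m + 1) (k + d) t * (t - x) ^ 2)
        + 1 / (2 * r) * ∑ k ∈ range (m + 1), bp α m k x := by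
        rw [mul_sum, mul_sum, ← sum_add_distrib]
        exact sum_congr rfl fun k _ => by ring
    _ ≤ r / 2 * (A / (m + 1)) + 1 / (2 * r) := by
        rw [sum_bp hm, mul_one]
        gcongr
        exact sum_bp_mul_integral_pal_mul_sq_sub_le hα hρ hm hd hx
    _ = (A + 1) / 2 / r := by
        rw [← hr2]
        field_simp
    _ = _ := by ring

end Paltanea

theorem stmt_8 (α ρ : ℝ) (hα : α ∈ Set.Icc (0:ℝ) 1) (hρ : 0 < ρ) :
    ∃ C > (0:ℝ), ∀ n : ℕ, 2 ≤ n → ∀ x ∈ Set.Icc (0:ℝ) 1,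
      (∑ k ∈ Finset.range n,
          bp α (n - 1) (k : ℤ) x * ∫ t in (0:ℝ)..1, pal ρ n k t * |t - x|)
        ≤ C / Real.sqrt n ∧
      (∑ k ∈ Finset.range n,
          bp α (n - 1) (k : ℤ) x * ∫ t in (0:ℝ)..1, pal ρ n (k + 1) t * |t - x|)
        ≤ C / Real.sqrt n := by
  refine ⟨(1 / (4 * ρ) + 2 * (ρ + 1) ^ 2 / ρ ^ 2 + 2) / 2, by positivity, ?_⟩
  rintro n hn x hx
  obtain ⟨m, rfl⟩ : ∃ m, n = m + 1 := ⟨n - 1, by omega⟩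
  rw [Nat.add_sub_cancel]
  exact ⟨by simpa using sum_bp_mul_integral_pal_mul_abs_sub_le hα hρ (by omega) zero_le_one hx,
    sum_bp_mul_integral_pal_mul_abs_sub_le hα hρ (by omega) le_rfl hx⟩
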